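/- arXiv:2110.09629 — 7 statements merged into one kernel-verified Lean document; each statement's English description precedes it below -/
import Mathlib

section
/- Let $p$ be an odd prime, $r$ a positive integer, $u$ a positive integer, and $m$ a positive integer not divisible by $p$. Then for any integer $\ell$, the rational number $\sum 1/i$, summed over all integers $i$ with $1 \le i \le u m p^r$, $i \equiv \ell \pmod m$, and $\gcd(i,p)=1$, is congruent to $0$ modulo $p^r$. -/
/-!
Fix `t` with `t ≡ 1 (mod m)` and `t ≡ -1 (mod p^r)`, and split `[0, u m p^r)` into blocks of
length `M = m p^r`. Multiplying by `t` modulo `M` inside each block is an involution of the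
summation set (as `t² ≡ 1 (mod M)`), and it pairs `i` with some `j ≡ -i (mod p^r)`. Hence
`1/i + 1/j = (i + j)/(i j)` has `p`-adic norm at most `p^(-r)`, so does twice the sum, and `2` is a
`p`-adic unit since `p` is odd.
-/

open Finset

namespace padicNorm

variable {p : ℕ} [Fact p.Prime]

theorem pow_dvd_num_of_le {q : ℚ} {r : ℕ} (h : padicNorm p q ≤ (p : ℚ) ^ (-r : ℤ)) :
    (p : ℤ) ^ r ∣ q.num := by
  rw [← Nat.cast_pow, padicNorm.dvd_iff_norm_le]
  calc padicNorm p q.num = padicNorm p q * padicNorm p q.den := by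
        rw [← padicNorm.mul, Rat.mul_den_eq_num]
    _ ≤ padicNorm p q * 1 := mul_le_mul_of_nonneg_left (of_nat _) (padicNorm.nonneg q)
    _ ≤ _ := by rwa [mul_one]

theorem one_div_add_one_div_le {a b r : ℕ} (ha : ¬p ∣ a) (hb : ¬p ∣ b) (hab : p ^ r ∣ a + b) :
    padicNorm p (1 / a + 1 / b) ≤ (p : ℚ) ^ (-r : ℤ) := by
  have ha0 : (a : ℚ) ≠ 0 := Nat.cast_ne_zero.mpr (by rintro rfl; exact ha (dvd_zero p))
  have hb0 : (b : ℚ) ≠ 0 := Nat.cast_ne_zero.mpr (by rintro rfl; exact hb (dvd_zero p))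
  have hsum : (1 / a + 1 / b : ℚ) = ((a + b : ℕ) : ℤ) / (a * b) := by
    push_cast; field_simp; ring
  rw [hsum, padicNorm.div, padicNorm.mul, (nat_eq_one_iff a).mpr ha, (nat_eq_one_iff b).mpr hb,
    mul_one, div_one, ← dvd_iff_norm_le]
  exact_mod_cast hab

theorem sum_le_of_involution (hp2 : p ≠ 2) {ι : Type*} {s : Finset ι} {f : ι → ℚ} {c : ℚ}
    (hc : 0 ≤ c) (σ : ι → ι) (hσ : ∀ i ∈ s, σ i ∈ s) (hσσ : ∀ i ∈ s, σ (σ i) = i)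
    (hpair : ∀ i ∈ s, padicNorm p (f i + f (σ i)) ≤ c) :
    padicNorm p (∑ i ∈ s, f i) ≤ c := by
  have htwice : 2 * ∑ i ∈ s, f i = ∑ i ∈ s, (f i + f (σ i)) := by
    rw [two_mul, sum_add_distrib, sum_nbij' σ σ hσ hσ hσσ hσσ (fun _ _ => rfl)]
  have htwo : padicNorm p 2 = 1 := by
    exact_mod_cast (nat_eq_one_iff 2).mpr
      fun h => hp2 ((Nat.prime_dvd_prime_iff_eq Fact.out Nat.prime_two).mp h)
  calc padicNorm p (∑ i ∈ s, f i) = padicNorm p (2 * ∑ i ∈ s, f i) := by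
        rw [padicNorm.mul, htwo, one_mul]
    _ ≤ c := by rw [htwice]; exact sum_le' hpair hc

end padicNorm

namespace Nat

def blockMul (M t i : ℕ) : ℕ := M * (i / M) + i * t % M

variable {M t : ℕ}

theorem blockMul_div (hM : 0 < M) (i : ℕ) : blockMul M t i / M = i / M := by
  rw [blockMul, Nat.mul_add_div hM, Nat.div_eq_of_lt (Nat.mod_lt _ hM), add_zero]

theorem blockMul_modEq (i : ℕ) : blockMul M t i ≡ i * t [MOD M] := by
  rw [blockMul, Nat.ModEq, Nat.mul_add_mod, Nat.mod_mod]

theorem blockMul_blockMul (hM : 0 < M) (ht : t * t ≡ 1 [MOD M]) (i : ℕ) :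
    blockMul M t (blockMul M t i) = i := by
  have hmod : blockMul M t i * t ≡ i [MOD M] := by
    have h := (blockMul_modEq (M := M) (t := t) i).mul_right t
    rw [mul_assoc] at h
    simpa using h.trans (ht.mul_left i)
  rw [blockMul, blockMul_div hM, show blockMul M t i * t % M = i % M from hmod, Nat.div_add_mod]

theorem blockMul_lt_mul (hM : 0 < M) {u i : ℕ} (hi : i < u * M) : blockMul M t i < u * M := by
  rw [← Nat.div_lt_iff_lt_mul hM] at hi ⊢
  rwa [blockMul_div hM]

theorem blockMul_mul_modEq_left {m q t : ℕ} (ht : t ≡ 1 [MOD m]) (i : ℕ) :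
    blockMul (m * q) t i ≡ i [MOD m] := by
  simpa using ((blockMul_modEq i).of_mul_right q).trans (ht.mul_left i)

theorem dvd_add_blockMul_mul {m q t : ℕ} (ht : q ∣ t + 1) (i : ℕ) :
    q ∣ i + blockMul (m * q) t i := by
  rw [← Nat.modEq_zero_iff_dvd]
  calc i + blockMul (m * q) t i ≡ i * (t + 1) [MOD q] := by
        rw [mul_add, mul_one, add_comm]; exact ((blockMul_modEq i).of_mul_left m).add_right i
    _ ≡ 0 [MOD q] := Nat.modEq_zero_iff_dvd.mpr (ht.mul_left i)

theorem exists_modEq_one_dvd_add_one {a b : ℕ} (hab : a.Coprime b) (hb : 0 < b) :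
    ∃ t, t ≡ 1 [MOD a] ∧ b ∣ t + 1 ∧ t * t ≡ 1 [MOD a * b] := by
  obtain ⟨t, hta, htb⟩ := Nat.chineseRemainder hab 1 (b - 1)
  have hdvd : b ∣ t + 1 := by
    rw [← Nat.modEq_zero_iff_dvd]
    exact (by simpa [Nat.sub_add_cancel hb] using htb.add_right 1 : t + 1 ≡ b [MOD b]).trans
      (Nat.modEq_zero_iff_dvd.mpr dvd_rfl)
  refine ⟨t, hta, hdvd, (Nat.modEq_and_modEq_iff_modEq_mul hab).mp ⟨by simpa using hta.mul hta, ?_⟩⟩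
  have h : t * (t + 1) ≡ 1 * (t + 1) [MOD b] :=
    (Nat.modEq_zero_iff_dvd.mpr (hdvd.mul_left t)).trans
      (Nat.modEq_zero_iff_dvd.mpr (hdvd.mul_left 1)).symm
  exact Nat.ModEq.add_right_cancel' t (by simpa [mul_add, add_comm] using h)

end Nat

theorem harmonic_arith_prog_vanishes_general
    (p r u m : ℕ) (ℓ : ℤ)
    (hp : p.Prime) (hpodd : Odd p) (hr : 0 < r)
    (hm : 0 < m) (hpm : ¬ p ∣ m) :
    (p : ℤ) ^ r ∣
      ((∑ i ∈ (Finset.Icc 1 (u * m * p ^ r)).filter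
          (fun i : ℕ => (i : ℤ) % (m : ℤ) = ℓ % (m : ℤ) ∧ Nat.Coprime i p),
        (1 : ℚ) / (i : ℚ))).num := by
  have := Fact.mk hp
  have hpr : p ∣ p ^ r := dvd_pow_self p hr.ne'
  have hM : 0 < m * p ^ r := Nat.mul_pos hm (pow_pos hp.pos r)
  obtain ⟨t, ht1, ht2, htt⟩ := Nat.exists_modEq_one_dvd_add_one
    (Nat.Coprime.pow_right r ((hp.coprime_iff_not_dvd).mpr hpm).symm) (pow_pos hp.pos r)
  set σ := Nat.blockMul (m * p ^ r) t
  have hpair : ∀ i, ¬p ∣ i → ¬p ∣ σ i ∧ p ^ r ∣ i + σ i := fun i hi =>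
    have h := Nat.dvd_add_blockMul_mul ht2 i
    ⟨fun hσ => hi ((Nat.dvd_add_left hσ).mp (hpr.trans h)), h⟩
  have hcop {i : ℕ} : Nat.Coprime i p ↔ ¬p ∣ i := Nat.coprime_comm.trans hp.coprime_iff_not_dvd
  refine padicNorm.pow_dvd_num_of_le <| padicNorm.sum_le_of_involution
    (by rintro rfl; exact absurd hpodd (by decide)) (by positivity) σ ?_
    (fun i _ => Nat.blockMul_blockMul hM htt i) ?_
  · intro i hi
    simp only [mem_filter, mem_Icc, hcop] at hi ⊢
    obtain ⟨⟨-, hiN⟩, hiℓ, hpi⟩ := hi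
    have hiN' : i < u * (m * p ^ r) := by
      rw [← mul_assoc]
      exact lt_of_le_of_ne hiN fun h => hpi (h ▸ dvd_mul_of_dvd_right hpr _)
    refine ⟨⟨Nat.one_le_iff_ne_zero.mpr ?_, ?_⟩, ?_, (hpair i hpi).1⟩
    · exact fun h => (hpair i hpi).1 (h ▸ dvd_zero p)
    · rw [mul_assoc]; exact (Nat.blockMul_lt_mul hM hiN').le
    · exact (Int.natCast_modEq_iff.mpr (Nat.blockMul_mul_modEq_left ht1 i)).trans hiℓ
  · intro i hi
    simp only [mem_filter, hcop] at hi
    exact padicNorm.one_div_add_one_div_le hi.2.2 (hpair i hi.2.2).1 (hpair i hi.2.2).2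

/-- **Lemma 2.1.** For an odd prime `p`, `r ≥ 1`, `u ≥ 1`, `m ≥ 1` with `p ∤ m`, and
any integer `ℓ`, the sum `∑ 1/i` over `1 ≤ i ≤ u m p^r` with `i ≡ ℓ (mod m)` and
`gcd(i, p) = 1` is congruent to `0` mod `p ^ r`. -/
theorem harmonic_arith_prog_vanishes
    (p r u m : ℕ) (ℓ : ℤ)
    (hp : p.Prime) (hpodd : Odd p) (hr : 0 < r) (hu : 0 < u)
    (hm : 0 < m) (hpm : ¬ p ∣ m) :
    (p : ℤ) ^ r ∣
      ((∑ i ∈ (Finset.Icc 1 (u * m * p ^ r)).filter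
          (fun i : ℕ => (i : ℤ) % (m : ℤ) = ℓ % (m : ℤ) ∧ Nat.Coprime i p),
        (1 : ℚ) / (i : ℚ))).num :=
  harmonic_arith_prog_vanishes_general p r u m ℓ hp hpodd hr hm hpm
end

section
/- Let $p$ be an odd prime, $r$ a positive integer, and $u$, $v$ positive integers. Let $c$ be a positive integer not divisible by $p$, and let $a$ and $b$ be positive integers coprime to $c$. Then the rational number $\sum 1/(ij)$, summed over all pairs of integers $(i,j)$ with $1 \le i \le u c p^r$, $1 \le j \le v c p^r$, $a i \equiv b j \pmod c$, and $\gcd(ij,p)=1$, is congruent to $0$ modulo $p^{2r}$. -/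
/-!
Put `m = c p^r` and pick `κ ≡ 1 (mod c)`, `κ ≡ -1 (mod p^r)`. The map `σ` that keeps the block
`⌊i / m⌋` of `i` and multiplies its residue mod `m` by `κ` is an involution of `[0, u m)` that
preserves `i mod c` and divisibility by `p`, with `p^r ∣ i + σ i`. (Coprimality to `p` discards
`i = 0` and `i = u m`, so the range `[1, u m]` may be replaced by `[0, u m)`.) Averaging the sum `S`
over the images of `(i, j)` under `σ` in each coordinate gives
`4 S = ∑ (i + σ i)(j + σ j) / (i σ(i) j σ(j))`, a sum of terms of `p`-adic norm at most `p^(-2r)`;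
since `p` is odd, the same bound holds for `S`.
-/

open Finset Function

def twist (m κ i : ℕ) : ℕ := m * (i / m) + κ * i % m

theorem twist_modEq (m κ i : ℕ) : twist m κ i ≡ κ * i [MOD m] := by
  simp only [twist, Nat.ModEq, Nat.mul_add_mod, Nat.mod_mod]

theorem twist_div (m κ i : ℕ) : twist m κ i / m = i / m := by
  rcases m.eq_zero_or_pos with rfl | hm
  · simp
  · rw [twist, Nat.mul_add_div hm, Nat.div_eq_of_lt (Nat.mod_lt _ hm), add_zero]

theorem twist_lt_mul_iff {m : ℕ} (hm : 0 < m) (κ u i : ℕ) : twist m κ i < u * m ↔ i < u * m := by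
  rw [← Nat.div_lt_iff_lt_mul hm, ← Nat.div_lt_iff_lt_mul hm, twist_div]

theorem twist_involutive {m κ : ℕ} (hκ : κ * κ ≡ 1 [MOD m]) : Involutive (twist m κ) := by
  intro i
  have h : κ * twist m κ i ≡ i [MOD m] := calc
    κ * twist m κ i ≡ κ * (κ * i) [MOD m] := (twist_modEq m κ i).mul_left κ
    _ = κ * κ * i := (mul_assoc ..).symm
    _ ≡ 1 * i [MOD m] := hκ.mul_right i
    _ = i := one_mul i
  rw [twist, twist_div, show κ * twist m κ i % m = i % m from h, Nat.div_add_mod]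

section CRT

variable {m n κ : ℕ}

theorem exists_modEq_one_and_dvd_add_one (hmn : m.Coprime n) (hn : 0 < n) :
    ∃ κ, κ ≡ 1 [MOD m] ∧ n ∣ κ + 1 := by
  obtain ⟨κ, hκm, hκn⟩ := Nat.chineseRemainder hmn 1 (n - 1)
  refine ⟨κ, hκm, Nat.modEq_zero_iff_dvd.1 ((hκn.add_right 1).trans ?_)⟩
  rw [Nat.sub_add_cancel hn]
  exact Nat.modEq_zero_iff_dvd.2 dvd_rfl

theorem mul_self_modEq_one (hmn : m.Coprime n) (hκm : κ ≡ 1 [MOD m]) (hκn : n ∣ κ + 1) :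
    κ * κ ≡ 1 [MOD m * n] := by
  refine (Nat.modEq_and_modEq_iff_modEq_mul hmn).1 ⟨by simpa using hκm.mul hκm, ?_⟩
  rw [Nat.modEq_iff_dvd]
  refine ((Int.natCast_dvd_natCast.2 hκn).mul_right (1 - κ : ℤ)).trans (dvd_of_eq ?_)
  push_cast
  ring

theorem twist_modEq_self (hκm : κ ≡ 1 [MOD m]) (i : ℕ) : twist (m * n) κ i ≡ i [MOD m] :=
  calc twist (m * n) κ i ≡ κ * i [MOD m] := (twist_modEq _ κ i).of_mul_right n
    _ ≡ 1 * i [MOD m] := hκm.mul_right i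
    _ = i := one_mul i

theorem dvd_add_twist (hκn : n ∣ κ + 1) (i : ℕ) : n ∣ i + twist (m * n) κ i := by
  have h : i + twist (m * n) κ i ≡ (κ + 1) * i [MOD n] := by
    convert ((twist_modEq _ κ i).of_mul_left m).add_left i using 1
    ring
  exact Nat.modEq_zero_iff_dvd.1 (h.trans (Nat.modEq_zero_iff_dvd.2 (hκn.mul_right i)))

theorem exists_involutive_modEq_self_dvd_add (hmn : m.Coprime n) (hm : 0 < m) (hn : 0 < n) :
    ∃ σ : ℕ → ℕ, Involutive σ ∧ (∀ i, σ i ≡ i [MOD m]) ∧ (∀ i, n ∣ i + σ i) ∧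
      ∀ k i, σ i < k * (m * n) ↔ i < k * (m * n) := by
  obtain ⟨κ, hκm, hκn⟩ := exists_modEq_one_and_dvd_add_one hmn hn
  exact ⟨twist (m * n) κ, twist_involutive (mul_self_modEq_one hmn hκm hκn),
    twist_modEq_self hκm, dvd_add_twist hκn, twist_lt_mul_iff (Nat.mul_pos hm hn) κ⟩

end CRT

theorem Finset.sum_comp_involutive {ι M : Type*} [AddCommMonoid M] {τ : ι → ι} (hτ : Involutive τ)
    {s : Finset ι} (hs : ∀ x ∈ s, τ x ∈ s) (g : ι → M) : ∑ x ∈ s, g (τ x) = ∑ x ∈ s, g x :=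
  Finset.sum_nbij' τ τ hs hs (fun x _ => hτ x) (fun x _ => hτ x) (fun _ _ => rfl)

theorem four_mul_sum_eq_sum_mul_add {α R : Type*} [CommRing R] {σ : α → α} (hσ : Involutive σ)
    {s : Finset (α × α)} (hs : ∀ x ∈ s, (σ x.1, x.2) ∈ s ∧ (x.1, σ x.2) ∈ s) (f : α → R) :
    4 * ∑ x ∈ s, f x.1 * f x.2 = ∑ x ∈ s, (f x.1 + f (σ x.1)) * (f x.2 + f (σ x.2)) := by
  have h₁ (g : α × α → R) := Finset.sum_comp_involutive (τ := fun x => (σ x.1, x.2))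
    (fun x => Prod.ext (hσ x.1) rfl) (fun x hx => (hs x hx).1) g
  have h₂ (g : α × α → R) := Finset.sum_comp_involutive (τ := fun x => (x.1, σ x.2))
    (fun x => Prod.ext rfl (hσ x.2)) (fun x hx => (hs x hx).2) g
  have e₁ : ∑ x ∈ s, f (σ x.1) * f x.2 = ∑ x ∈ s, f x.1 * f x.2 := h₁ fun x => f x.1 * f x.2
  have e₂ : ∑ x ∈ s, f x.1 * f (σ x.2) = ∑ x ∈ s, f x.1 * f x.2 := h₂ fun x => f x.1 * f x.2
  have e₁₂ : ∑ x ∈ s, f (σ x.1) * f (σ x.2) = ∑ x ∈ s, f (σ x.1) * f x.2 :=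
    h₂ fun x => f (σ x.1) * f x.2
  simp only [add_mul, mul_add, Finset.sum_add_distrib, e₁₂, e₁, e₂]
  ring

section padic

variable {p : ℕ} [Fact p.Prime]

theorem padicNorm_one_div_add_one_div_le {r i j : ℕ} (hi : ¬p ∣ i) (hj : ¬p ∣ j)
    (h : p ^ r ∣ i + j) : padicNorm p (1 / i + 1 / j) ≤ (p : ℚ) ^ (-(r : ℤ)) := by
  have hi0 : (i : ℚ) ≠ 0 := Nat.cast_ne_zero.2 (by rintro rfl; exact hi (dvd_zero p))
  have hj0 : (j : ℚ) ≠ 0 := Nat.cast_ne_zero.2 (by rintro rfl; exact hj (dvd_zero p))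
  have hij := (padicNorm.dvd_iff_norm_le (p := p) (z := ((i + j : ℕ) : ℤ))).1 (mod_cast h)
  rw [one_div_add_one_div hi0 hj0, padicNorm.div, padicNorm.mul,
    (padicNorm.nat_eq_one_iff _).2 hi, (padicNorm.nat_eq_one_iff _).2 hj, mul_one, div_one]
  exact_mod_cast hij

theorem padicNorm_four_mul_sum_le {r : ℕ} {σ : ℕ → ℕ} (hσ : Involutive σ)
    (hadd : ∀ i, p ^ r ∣ i + σ i) {s : Finset (ℕ × ℕ)}
    (hs : ∀ x ∈ s, (σ x.1, x.2) ∈ s ∧ (x.1, σ x.2) ∈ s) (hndvd : ∀ x ∈ s, ¬p ∣ x.1 ∧ ¬p ∣ x.2) :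
    padicNorm p (4 * ∑ x ∈ s, 1 / (x.1 : ℚ) * (1 / x.2)) ≤ (p : ℚ) ^ (-(2 * r : ℤ)) := by
  rw [four_mul_sum_eq_sum_mul_add hσ hs fun i : ℕ => 1 / (i : ℚ)]
  refine padicNorm.sum_le' (fun x hx => ?_) (by positivity)
  have hσ₁ := (hndvd _ (hs x hx).1).1
  have hσ₂ := (hndvd _ (hs x hx).2).2
  rw [padicNorm.mul, show -(2 * r : ℤ) = -r + -r by ring,
    zpow_add₀ (by exact_mod_cast (Fact.out : p.Prime).ne_zero)]
  exact mul_le_mul (padicNorm_one_div_add_one_div_le (hndvd x hx).1 hσ₁ (hadd x.1))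
    (padicNorm_one_div_add_one_div_le (hndvd x hx).2 hσ₂ (hadd x.2)) (padicNorm.nonneg _)
    (by positivity)

theorem pow_dvd_num_of_padicNorm_le {q : ℚ} {n : ℕ} (h : padicNorm p q ≤ (p : ℚ) ^ (-(n : ℤ))) :
    (p : ℤ) ^ n ∣ q.num := by
  have hnum : padicNorm p q.num = padicNorm p q * padicNorm p q.den := by
    rw [← padicNorm.mul, Rat.mul_den_eq_num]
  have hle : padicNorm p q.num ≤ padicNorm p q := by
    rw [hnum]
    exact mul_le_of_le_one_right (padicNorm.nonneg q) (padicNorm.of_nat _)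
  exact_mod_cast (padicNorm.dvd_iff_norm_le (p := p)).2 (hle.trans h)

theorem padicNorm_four (hp : Odd p) : padicNorm p 4 = 1 := by
  exact_mod_cast (padicNorm.nat_eq_one_iff 4).2 fun h4 => (Fact.out : p.Prime).one_lt.ne'
    (Nat.Coprime.eq_one_of_dvd (hp.coprime_two_right.pow_right 2) h4)

end padic

theorem filter_Icc_product_eq_filter_range_product {p M N : ℕ} {P : ℕ × ℕ → Prop}
    [DecidablePred P] (hM : p ∣ M) (hN : p ∣ N) (hP : ∀ x, P x → ¬p ∣ x.1 ∧ ¬p ∣ x.2) :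
    (Icc 1 M ×ˢ Icc 1 N).filter P = (range M ×ˢ range N).filter P := by
  have key {n i : ℕ} (hn : p ∣ n) (hi : ¬p ∣ i) : i ∈ Icc 1 n ↔ i ∈ range n := by
    have : i ≠ 0 := by rintro rfl; exact hi (dvd_zero p)
    have : i ≠ n := by rintro rfl; exact hi hn
    simp only [mem_Icc, mem_range]
    omega
  ext x
  simp only [mem_filter, mem_product]
  exact and_congr_left fun hx => and_congr (key hM (hP x hx).1) (key hN (hP x hx).2)

theorem double_harmonic_vanishes_general
    (p r u v c a b : ℕ)
    (hp : p.Prime) (hpodd : Odd p) (hr : 0 < r)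
    (hpc : ¬ p ∣ c) :
    (p : ℤ) ^ (2 * r) ∣
      ((∑ t ∈ ((Finset.Icc 1 (u * c * p ^ r) ×ˢ Finset.Icc 1 (v * c * p ^ r)).filter
          (fun t : ℕ × ℕ => (a * t.1) % c = (b * t.2) % c ∧ Nat.Coprime (t.1 * t.2) p)),
        (1 : ℚ) / ((t.1 * t.2 : ℕ) : ℚ))).num := by
  have := Fact.mk hp
  have hc : 0 < c := Nat.pos_of_ne_zero (by rintro rfl; exact hpc (dvd_zero p))
  obtain ⟨σ, hσ, hσc, hadd, hlt⟩ := exists_involutive_modEq_self_dvd_add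
    ((Nat.coprime_comm.1 (hp.coprime_iff_not_dvd.2 hpc)).pow_right r) hc (pow_pos hp.pos r)
  have hdvd_σ (i : ℕ) : p ∣ σ i ↔ p ∣ i := by
    have h := (dvd_pow_self p hr.ne').trans (hadd i)
    exact ⟨fun hσi => (Nat.dvd_add_left hσi).1 h, fun hi => (Nat.dvd_add_right hi).1 h⟩
  have hcop (i j : ℕ) : (i * j).Coprime p ↔ ¬p ∣ i ∧ ¬p ∣ j := by
    simp only [Nat.coprime_comm (m := p), hp.coprime_iff_not_dvd, hp.dvd_mul, not_or]
  have hpm : p ∣ c * p ^ r := (dvd_pow_self p hr.ne').mul_left c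
  rw [mul_assoc u, mul_assoc v, filter_Icc_product_eq_filter_range_product (hpm.mul_left u)
    (hpm.mul_left v) fun x hx => (hcop x.1 x.2).1 hx.2]
  set s := (range (u * (c * p ^ r)) ×ˢ range (v * (c * p ^ r))).filter
    fun t : ℕ × ℕ => (a * t.1) % c = (b * t.2) % c ∧ Nat.Coprime (t.1 * t.2) p
  have hmod (k i : ℕ) : k * σ i % c = k * i % c := (hσc i).mul_left k
  have hs (x : ℕ × ℕ) (hx : x ∈ s) : (σ x.1, x.2) ∈ s ∧ (x.1, σ x.2) ∈ s := by
    simp only [s, mem_filter, mem_product, mem_range, hcop, hdvd_σ, hlt, hmod] at hx ⊢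
    exact ⟨hx, hx⟩
  have h := padicNorm_four_mul_sum_le hσ hadd hs fun x hx =>
    (hcop x.1 x.2).1 (mem_filter.1 hx).2.2
  rw [padicNorm.mul, padicNorm_four hpodd, one_mul] at h
  refine pow_dvd_num_of_padicNorm_le ?_
  push_cast
  simpa only [one_div_mul_one_div] using h

/-- **Lemma 2.2.** For an odd prime `p`, `r, u, v ≥ 1`, a positive integer `c` with
`p ∤ c`, and positive integers `a, b` coprime to `c`, the sum `∑ 1/(ij)` over
`1 ≤ i ≤ u c p^r`, `1 ≤ j ≤ v c p^r` with `a i ≡ b j (mod c)` and `gcd(ij, p) = 1`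
is congruent to `0` mod `p ^ (2r)`. -/
theorem double_harmonic_vanishes
    (p r u v c a b : ℕ)
    (hp : p.Prime) (hpodd : Odd p) (hr : 0 < r) (hu : 0 < u) (hv : 0 < v)
    (hc : 0 < c) (hpc : ¬ p ∣ c)
    (ha : 0 < a) (hb : 0 < b)
    (hac : Nat.Coprime a c) (hbc : Nat.Coprime b c) :
    (p : ℤ) ^ (2 * r) ∣
      ((∑ t ∈ ((Finset.Icc 1 (u * c * p ^ r) ×ˢ Finset.Icc 1 (v * c * p ^ r)).filter
          (fun t : ℕ × ℕ => (a * t.1) % c = (b * t.2) % c ∧ Nat.Coprime (t.1 * t.2) p)),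
        (1 : ℚ) / ((t.1 * t.2 : ℕ) : ℚ))).num :=
  double_harmonic_vanishes_general p r u v c a b hp hpodd hr hpc
end

section
/- Let $p$ be an odd prime, $u$ a positive integer, and $s$ an integer not divisible by $p$. Define $U(s;u,p^r) := \sum_{k=0}^{u p^{r-1}-1} 1/(kp+s)$ for positive integers $r$. Then $U(s;u,p^2) \equiv p\,U(s;u,p) \pmod{p^2}$, and for every integer $r \ge 2$, $U(s;u,p^{r+1}) \equiv p\,U(s;u,p^r) \pmod{p^{r+2}}$. -/
/-!
Split the range of `U(s; u, p^{r+1})` into `p` blocks of length `n = u p^{r-1}`: block `j`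
consists of the terms `1 / (A_i + j c)`, where `A_i = i p + s` is a `p`-adic unit and
`c = u p^r`. Expanding `1 / (A + j c) = 1 / A - j c / A² + O(c²)`, the zeroth-order terms add up
to `p U(s; u, p^r)`, the first-order ones to `-(∑_{j<p} j) c ∑_{i<n} 1 / A_i²`, and the rest has
valuation `≥ 2r`. For odd `p` the factor `∑_{j<p} j = p (p - 1) / 2` is divisible by `p`, and for
`r ≥ 2` also `∑_{i<n} 1 / A_i² ≡ n / s² ≡ 0 (mod p)`.
-/

open Finset

/-- `U(s; u, p^r) = ∑_{k=0}^{u p^{r-1} - 1} 1/(kp + s)`. -/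
def U (p : ℕ) (s : ℤ) (u r : ℕ) : ℚ :=
  ∑ k ∈ Finset.range (u * p ^ (r - 1)), 1 / ((k : ℚ) * (p : ℚ) + (s : ℚ))

theorem Finset.sum_range_mul_eq_sum_sum {M : Type*} [AddCommMonoid M] (f : ℕ → M) (a b : ℕ) :
    ∑ k ∈ range (a * b), f k = ∑ j ∈ range a, ∑ i ∈ range b, f (j * b + i) := by
  induction a with
  | zero => simp
  | succ a ih => rw [Nat.succ_mul, sum_range_add, ih, sum_range_succ]

theorem Rat.pow_dvd_num_of_padicNorm_le {p : ℕ} [hp : Fact p.Prime] {x : ℚ} {m : ℕ}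
    (h : padicNorm p x ≤ (p : ℚ) ^ (-(m : ℤ))) : (p : ℤ) ^ m ∣ x.num := by
  rcases eq_or_ne x 0 with rfl | hx
  · simp
  rw [padicNorm.eq_zpow_of_nonzero hx, zpow_le_zpow_iff_right₀ (mod_cast hp.out.one_lt),
    neg_le_neg_iff, padicValRat_def] at h
  exact (padicValInt_dvd_iff m _).2 (Or.inr (by omega))

namespace padicNorm

variable {p : ℕ} [hp : Fact p.Prime]

theorem mul_le_zpow_neg {x y : ℚ} {a b : ℤ} (hx : padicNorm p x ≤ (p : ℚ) ^ (-a))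
    (hy : padicNorm p y ≤ (p : ℚ) ^ (-b)) : padicNorm p (x * y) ≤ (p : ℚ) ^ (-(a + b)) := by
  rw [padicNorm.mul, neg_add, zpow_add₀ (mod_cast hp.out.ne_zero)]
  exact mul_le_mul hx hy (padicNorm.nonneg _) (by positivity)

theorem natCast_le_of_pow_dvd {n r : ℕ} (h : p ^ r ∣ n) :
    padicNorm p n ≤ (p : ℚ) ^ (-(r : ℤ)) := by
  exact_mod_cast padicNorm.dvd_iff_norm_le.1 (Int.natCast_dvd_natCast.2 h)

theorem inv_sub_inv {x y : ℚ} (hx : padicNorm p x = 1) (hy : padicNorm p y = 1) :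
    padicNorm p (x⁻¹ - y⁻¹) = padicNorm p (x - y) := by
  have hx0 : x ≠ 0 := by rintro rfl; simp at hx
  have hy0 : y ≠ 0 := by rintro rfl; simp at hy
  rw [_root_.inv_sub_inv hx0 hy0, padicNorm.div, padicNorm.mul, hx, hy, mul_one, div_one,
    ← neg_sub, padicNorm.neg]

theorem inv_add_sub_inv_add_div_sq {a d : ℚ} (ha : padicNorm p a = 1)
    (had : padicNorm p (a + d) = 1) :
    padicNorm p ((a + d)⁻¹ - a⁻¹ + d / a ^ 2) = padicNorm p d ^ 2 := by
  have ha0 : a ≠ 0 := by rintro rfl; simp at ha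
  have had0 : a + d ≠ 0 := by rintro h; simp [h] at had
  have hexp : (a + d)⁻¹ - a⁻¹ + d / a ^ 2 = d ^ 2 / (a ^ 2 * (a + d)) := by
    field_simp
    ring
  rw [hexp, padicNorm.div, padicNorm.mul, sq, sq, padicNorm.mul, padicNorm.mul, ha, had]
  ring

end padicNorm

theorem U_succ_succ_sub_eq (p u : ℕ) (s : ℤ) (r : ℕ) :
    U p s u (r + 2) - p * U p s u (r + 1) = ∑ j ∈ range p, ∑ i ∈ range (u * p ^ r),
      (((i : ℚ) * p + s + j * (u * p ^ (r + 1) : ℕ))⁻¹ - ((i : ℚ) * p + s)⁻¹) := by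
  have hlen : u * p ^ (r + 2 - 1) = p * (u * p ^ r) := by
    rw [show r + 2 - 1 = r + 1 by rfl, pow_succ]
    ring
  have hrep (x : ℚ) : (p : ℚ) * x = ∑ _j ∈ range p, x := by simp
  rw [U, U, hlen, sum_range_mul_eq_sum_sum, Nat.add_sub_cancel, hrep, ← sum_sub_distrib]
  refine sum_congr rfl fun j _ => ?_
  rw [← sum_sub_distrib]
  refine sum_congr rfl fun i _ => ?_
  rw [one_div, one_div]
  congr 2
  push_cast
  ring

section

variable {p : ℕ} [hp : Fact p.Prime] {s : ℤ}

theorem padicNorm_natCast_mul_add_eq_one (hs : ¬ (p : ℤ) ∣ s) (k : ℕ) :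
    padicNorm p ((k : ℚ) * p + s) = 1 := by
  have hcast : (k : ℚ) * p + s = ((k * p + s : ℤ) : ℚ) := by push_cast; ring
  rw [hcast, padicNorm.int_eq_one_iff]
  exact fun h => hs ((dvd_add_right (dvd_mul_left _ _)).1 h)

theorem padicNorm_sum_range_id_le (hodd : Odd p) :
    padicNorm p (∑ j ∈ range p, (j : ℚ)) ≤ (p : ℚ) ^ (-1 : ℤ) := by
  have hdvd : p ∣ (∑ j ∈ range p, j) * 2 := ⟨p - 1, sum_range_id_mul_two p⟩
  have hcop : p.Coprime 2 := (Nat.coprime_two_left.2 hodd).symm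
  have := padicNorm.natCast_le_of_pow_dvd (p := p) (r := 1)
    (by simpa using hcop.dvd_of_dvd_mul_right hdvd)
  simpa using this

theorem padicNorm_sum_inv_sq_le_one (hs : ¬ (p : ℤ) ∣ s) (n : ℕ) :
    padicNorm p (∑ i ∈ range n, (((i : ℚ) * p + s) ^ 2)⁻¹) ≤ 1 := by
  refine padicNorm.sum_le' (fun i _ => ?_) zero_le_one
  rw [inv_eq_one_div, padicNorm.div, sq, padicNorm.mul, padicNorm_natCast_mul_add_eq_one hs]
  norm_num

theorem padicNorm_sum_inv_sq_le (hs : ¬ (p : ℤ) ∣ s) {n : ℕ} (hn : p ∣ n) :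
    padicNorm p (∑ i ∈ range n, (((i : ℚ) * p + s) ^ 2)⁻¹) ≤ (p : ℚ) ^ (-1 : ℤ) := by
  have hunit : ∀ i : ℕ, padicNorm p (((i : ℚ) * p + s) ^ 2) = 1 := fun i => by
    rw [sq, padicNorm.mul, padicNorm_natCast_mul_add_eq_one hs, one_mul]
  have hs2 : padicNorm p ((s : ℚ) ^ 2) = 1 := by simpa using hunit 0
  have hsplit : ∑ i ∈ range n, (((i : ℚ) * p + s) ^ 2)⁻¹
      = ∑ i ∈ range n, ((((i : ℚ) * p + s) ^ 2)⁻¹ - ((s : ℚ) ^ 2)⁻¹)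
        + n * ((s : ℚ) ^ 2)⁻¹ := by
    rw [sum_sub_distrib, sum_const, card_range, nsmul_eq_mul]
    ring
  rw [hsplit]
  refine padicNorm.nonarchimedean.trans (max_le ?_ ?_)
  · refine padicNorm.sum_le' (fun i _ => ?_) (by positivity)
    have hfac : ((i : ℚ) * p + s) ^ 2 - (s : ℚ) ^ 2 = p * (i * ((i : ℚ) * p + 2 * s)) := by
      ring
    have hint : padicNorm p (i * ((i : ℚ) * p + 2 * s)) ≤ 1 := by
      exact_mod_cast padicNorm.of_int (p := p) (i * (i * p + 2 * s))
    rw [padicNorm.inv_sub_inv (hunit i) hs2, hfac, padicNorm.mul,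
      padicNorm.padicNorm_p_of_prime, zpow_neg_one]
    exact mul_le_of_le_one_right (by positivity) hint
  · rw [padicNorm.mul, inv_eq_one_div, padicNorm.div, hs2, div_one, padicNorm.one, mul_one]
    simpa using padicNorm.natCast_le_of_pow_dvd (p := p) (r := 1) (by simpa using hn)

theorem padicNorm_U_succ_succ_sub_le (hodd : Odd p) (hs : ¬ (p : ℤ) ∣ s) (u r : ℕ) {w : ℤ}
    (hW : padicNorm p (∑ i ∈ range (u * p ^ r), (((i : ℚ) * p + s) ^ 2)⁻¹)
      ≤ (p : ℚ) ^ (-w)) :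
    padicNorm p (U p s u (r + 2) - p * U p s u (r + 1))
      ≤ (p : ℚ) ^ (-min (2 * (r + 1) : ℤ) (r + 2 + w)) := by
  set c : ℚ := ((u * p ^ (r + 1) : ℕ) : ℚ)
  set A : ℕ → ℚ := fun i => (i : ℚ) * p + s
  have hp1 : (1 : ℚ) ≤ p := mod_cast hp.out.one_le
  have hc : padicNorm p c ≤ (p : ℚ) ^ (-(r + 1 : ℕ) : ℤ) :=
    padicNorm.natCast_le_of_pow_dvd (dvd_mul_left _ _)
  have hjc (j : ℕ) : padicNorm p (j * c) ≤ (p : ℚ) ^ (-(0 + (r + 1 : ℕ) : ℤ)) :=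
    padicNorm.mul_le_zpow_neg (by simpa using padicNorm.of_nat j) hc
  have hA (i : ℕ) : padicNorm p (A i) = 1 := padicNorm_natCast_mul_add_eq_one hs i
  have hAc (j i : ℕ) : padicNorm p (A i + j * c) = 1 := by
    have hcast : A i + j * c = ((i + j * u * p ^ r : ℕ) : ℚ) * p + s := by
      simp only [A, c]
      push_cast
      ring
    rw [hcast, padicNorm_natCast_mul_add_eq_one hs]
  have hsplit : U p s u (r + 2) - p * U p s u (r + 1)
      = ∑ j ∈ range p, ∑ i ∈ range (u * p ^ r),
          ((A i + j * c)⁻¹ - (A i)⁻¹ + j * c / A i ^ 2)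
        - (∑ j ∈ range p, (j : ℚ)) * c * ∑ i ∈ range (u * p ^ r), (A i ^ 2)⁻¹ := by
    rw [U_succ_succ_sub_eq, sum_mul, sum_mul_sum, ← sum_sub_distrib]
    refine sum_congr rfl fun j _ => ?_
    rw [← sum_sub_distrib]
    refine sum_congr rfl fun i _ => ?_
    ring
  rw [hsplit]
  refine padicNorm.sub.trans (max_le ?_ ?_)
  · refine padicNorm.sum_le' (fun j _ => padicNorm.sum_le' (fun i _ => ?_) (by positivity))
      (by positivity)
    rw [padicNorm.inv_add_sub_inv_add_div_sq (hA i) (hAc j i), sq, ← padicNorm.mul]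
    refine (padicNorm.mul_le_zpow_neg (hjc j) (hjc j)).trans ?_
    exact zpow_le_zpow_right₀ hp1 (by push_cast; omega)
  · refine (padicNorm.mul_le_zpow_neg (padicNorm.mul_le_zpow_neg
      (padicNorm_sum_range_id_le hodd) hc) hW).trans ?_
    exact zpow_le_zpow_right₀ hp1 (by push_cast; omega)

end

theorem U_step_congruence_general
    (p u : ℕ) (s : ℤ)
    (hp : p.Prime) (hpodd : Odd p) (hps : ¬ (p : ℤ) ∣ s) :
    (p : ℤ) ^ 2 ∣ (U p s u 2 - (p : ℚ) * U p s u 1).num ∧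
    ∀ r : ℕ, 2 ≤ r →
      (p : ℤ) ^ (r + 2) ∣ (U p s u (r + 1) - (p : ℚ) * U p s u r).num := by
  have := Fact.mk hp
  refine ⟨Rat.pow_dvd_num_of_padicNorm_le ?_, fun r hr => Rat.pow_dvd_num_of_padicNorm_le ?_⟩
  · have hW := padicNorm_sum_inv_sq_le_one hps u
    simpa using padicNorm_U_succ_succ_sub_le hpodd hps u 0 (w := 0) (by simpa using hW)
  · obtain ⟨r, rfl⟩ : ∃ k, r = k + 1 := ⟨r - 1, by omega⟩
    have hpn : p ∣ u * p ^ r := dvd_mul_of_dvd_right (dvd_pow_self p (by omega : r ≠ 0)) u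
    have hW := padicNorm_sum_inv_sq_le hps hpn
    convert padicNorm_U_succ_succ_sub_le hpodd hps u r hW using 3
    push_cast
    omega

/-- **Lemma 2.3(a).** `U(s;u,p²) ≡ p·U(s;u,p) (mod p²)`, and for `r ≥ 2`,
`U(s;u,p^{r+1}) ≡ p·U(s;u,p^r) (mod p^{r+2})`. -/
theorem U_step_congruence
    (p u : ℕ) (s : ℤ)
    (hp : p.Prime) (hpodd : Odd p) (hu : 0 < u) (hps : ¬ (p : ℤ) ∣ s) :
    (p : ℤ) ^ 2 ∣ (U p s u 2 - (p : ℚ) * U p s u 1).num ∧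
    ∀ r : ℕ, 2 ≤ r →
      (p : ℤ) ^ (r + 2) ∣ (U p s u (r + 1) - (p : ℚ) * U p s u r).num :=
  U_step_congruence_general p u s hp hpodd hps
end

section
/- Let $p$ be an odd prime, $u$ a positive integer, and $s$ an integer not divisible by $p$. Then for every positive integer $r$, the rational number $U(s;u,p^r) := \sum_{k=0}^{u p^{r-1}-1} 1/(kp+s)$ satisfies $U(s;u,p^r) \equiv 0 \pmod{p^{r-1}}$. -/
open Finset

/-- `q` can be written as `p^m * a / b` with `p ∤ b`. -/
def Good (p m : ℕ) (q : ℚ) : Prop :=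
  ∃ a b : ℤ, ¬ (p : ℤ) ∣ b ∧ q * (b : ℚ) = (p : ℚ) ^ m * (a : ℚ)

lemma good_zero {p : ℕ} (hp : p.Prime) (m : ℕ) : Good p m 0 := by
  refine ⟨0, 1, ?_, by simp⟩
  intro h
  have h1 : (p : ℤ) ≤ 1 := Int.le_of_dvd one_pos h
  have h2 := hp.two_le
  omega

lemma good_add {p m : ℕ} (hp : p.Prime) {x y : ℚ} (hx : Good p m x) (hy : Good p m y) :
    Good p m (x + y) := by
  obtain ⟨a1, b1, hb1, e1⟩ := hx
  obtain ⟨a2, b2, hb2, e2⟩ := hy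
  refine ⟨a1 * b2 + a2 * b1, b1 * b2, ?_, ?_⟩
  · intro h
    rcases (Nat.prime_iff_prime_int.mp hp).dvd_mul.mp h with h | h
    · exact hb1 h
    · exact hb2 h
  · push_cast
    linear_combination (b2 : ℚ) * e1 + (b1 : ℚ) * e2

lemma good_sum {p m : ℕ} (hp : p.Prime) {ι : Type*} (t : Finset ι) (f : ι → ℚ)
    (h : ∀ i ∈ t, Good p m (f i)) : Good p m (∑ i ∈ t, f i) :=
  Finset.sum_induction f (Good p m) (fun _ _ => good_add hp) (good_zero hp m) h

lemma good_num {p m : ℕ} (hp : p.Prime) {q : ℚ} (h : Good p m q) :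
    (p : ℤ) ^ m ∣ q.num := by
  obtain ⟨a, b, hb, e⟩ := h
  have hd : (q.den : ℚ) ≠ 0 := Nat.cast_ne_zero.mpr q.den_ne_zero
  have hq : q * (q.den : ℚ) = (q.num : ℚ) := by
    nth_rewrite 1 [← Rat.num_div_den q]
    exact div_mul_cancel₀ _ hd
  have e2 : (q.num : ℚ) * (b : ℚ) = (p : ℚ) ^ m * ((a : ℚ) * (q.den : ℚ)) := by
    rw [← hq]; linear_combination (q.den : ℚ) * e
  have e3 : q.num * b = (p : ℤ) ^ m * (a * (q.den : ℤ)) := by exact_mod_cast e2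
  have hcop : IsCoprime ((p : ℤ) ^ m) b :=
    (((Nat.prime_iff_prime_int.mp hp).coprime_iff_not_dvd).mpr hb).pow_left
  exact hcop.dvd_of_dvd_mul_right ⟨a * (q.den : ℤ), e3⟩

lemma sum_range_mul' {β : Type*} [AddCommMonoid β] (f : ℕ → β) (a b : ℕ) :
    ∑ k ∈ Finset.range (a * b), f k
      = ∑ i ∈ Finset.range a, ∑ j ∈ Finset.range b, f (i * b + j) := by
  induction a with
  | zero => simp
  | succ n ih =>
      rw [Nat.succ_mul, Finset.sum_range_add, ih, Finset.sum_range_succ]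

lemma not_dvd_lin {p : ℕ} {s : ℤ} (hps : ¬ (p : ℤ) ∣ s) (k : ℕ) :
    ¬ (p : ℤ) ∣ ((k : ℤ) * p + s) := by
  intro h
  exact hps ((dvd_add_right (Dvd.intro_left _ rfl)).mp h)

lemma good_U' (p u : ℕ) (s : ℤ) (hp : p.Prime) (hps : ¬ (p : ℤ) ∣ s) :
    ∀ n : ℕ, Good p n (U p s u (n + 1)) := by
  intro n
  induction n with
  | zero =>
      refine good_sum hp _ _ fun k _ => ?_
      have hk := not_dvd_lin hps k
      have hkq : ((k : ℚ) * p + s) ≠ 0 := by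
        intro h
        apply hk
        have : ((k : ℤ) * p + s : ℤ) = 0 := by exact_mod_cast h
        rw [this]; exact dvd_zero _
      exact ⟨1, (k : ℤ) * p + s, hk, by push_cast; field_simp⟩
  | succ n ih =>
      set M := u * p ^ n with hM
      have hrange : u * p ^ (n + 1 + 1 - 1) = p * M := by
        show u * p ^ (n + 1) = p * (u * p ^ n); ring
      have hU : U p s u (n + 1) = ∑ j ∈ Finset.range M, (1 / ((j : ℚ) * p + s)) := rfl
      have key : U p s u (n + 1 + 1)
          = (p : ℚ) * U p s u (n + 1)
            + ∑ i ∈ Finset.range p, ∑ j ∈ Finset.range M,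
                (1 / (((i * M + j : ℕ) : ℚ) * p + s) - 1 / ((j : ℚ) * p + s)) := by
        rw [U, hrange, sum_range_mul']
        have hsplit : ∀ i ∈ Finset.range p,
            ∑ j ∈ Finset.range M, (1 / (((i * M + j : ℕ) : ℚ) * p + s))
              = U p s u (n + 1)
                + ∑ j ∈ Finset.range M,
                    (1 / (((i * M + j : ℕ) : ℚ) * p + s) - 1 / ((j : ℚ) * p + s)) := by
          intro i _
          rw [hU, ← Finset.sum_add_distrib]
          exact Finset.sum_congr rfl fun j _ => by ring
        rw [Finset.sum_congr rfl hsplit, Finset.sum_add_distrib, Finset.sum_const,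
          Finset.card_range, nsmul_eq_mul]
      rw [key]
      refine good_add hp ?_ ?_
      · obtain ⟨a, b, hb, e⟩ := ih
        refine ⟨a, b, hb, ?_⟩
        rw [pow_succ, mul_comm ((p : ℚ) ^ n) (p : ℚ)]
        linear_combination (p : ℚ) * e
      · refine good_sum hp _ _ fun i _ => good_sum hp _ _ fun j _ => ?_
        set A : ℤ := (j : ℤ) * p + s with hA
        set B : ℤ := ((i * M + j : ℕ) : ℤ) * p + s with hB
        have hAd : ¬ (p : ℤ) ∣ A := not_dvd_lin hps j
        have hBd : ¬ (p : ℤ) ∣ B := not_dvd_lin hps (i * M + j)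
        have hA0 : (A : ℚ) ≠ 0 := by
          intro h
          apply hAd
          have : A = 0 := by exact_mod_cast h
          rw [this]; exact dvd_zero _
        have hB0 : (B : ℚ) ≠ 0 := by
          intro h
          apply hBd
          have : B = 0 := by exact_mod_cast h
          rw [this]; exact dvd_zero _
        have hBA : (B : ℚ) = (A : ℚ) + (i : ℚ) * u * (p : ℚ) ^ (n + 1) := by
          rw [hA, hB, hM]; push_cast; ring
        have hx : (((i * M + j : ℕ) : ℚ) * p + s) = (B : ℚ) := by
          rw [hB]; push_cast; ring
        have hy : ((j : ℚ) * p + s) = (A : ℚ) := by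
          rw [hA]; push_cast; ring
        rw [hx, hy]
        refine ⟨-((i : ℤ) * u), A * B, ?_, ?_⟩
        · intro h
          rcases (Nat.prime_iff_prime_int.mp hp).dvd_mul.mp h with h | h
          · exact hAd h
          · exact hBd h
        · have h1 : (1 / (B : ℚ) - 1 / (A : ℚ)) * ((A : ℚ) * (B : ℚ))
              = (A : ℚ) - (B : ℚ) := by
            field_simp
          push_cast
          rw [h1, hBA]; ring

/-- **Lemma 2.3(b).** For `r ≥ 1`, `U(s;u,p^r) ≡ 0 (mod p^{r-1})`. -/
theorem U_vanishes
    (p u : ℕ) (s : ℤ)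
    (hp : p.Prime) (hpodd : Odd p) (hu : 0 < u) (hps : ¬ (p : ℤ) ∣ s) :
    ∀ r : ℕ, 0 < r → (p : ℤ) ^ (r - 1) ∣ (U p s u r).num := by
  intro r hr
  obtain ⟨n, rfl⟩ : ∃ n, r = n + 1 := ⟨r - 1, by omega⟩
  simpa using good_num hp (good_U' p u s hp hps n)
end

section
/- Let $c$ be a positive integer not divisible by $3$. Fix an integer $a$ coprime to both $c$ and $3$, and for each positive integer $k$ with $\gcd(k,3)=1$ let $h(k)$ be the unique integer with $1 \le h(k) \le 3c-1$ and $h(k) \equiv a k \pmod{3c}$. Then $\sum_{k=1,\ \gcd(k,3)=1}^{3c-1} 1/(k\, h(k)) \equiv -c/a^3 \pmod{9}$. -/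
open Finset

lemma cancel9 {R : Type*} [CommRing R] {u v x y : R} (huv : u * v = 1)
    (hxy : x * u = y * u) : x = y := by
  have h1 : x * (u * v) = y * (u * v) := by
    rw [← mul_assoc, ← mul_assoc, hxy]
  simpa [huv] using h1

lemma z9_1 : ∀ x : ZMod 9, ((3*x+1)^5)^2 + ((3*x+2)^5)^2 = -1 := by decide

lemma z9_unit : ∀ x : ZMod 9, 3*x ≠ 0 → x * x^5 = 1 := by decide

lemma z9_3inv : ∀ x : ZMod 9, 3*x ≠ 0 → 3*(x^5)^3 = 3*x := by decide

lemma z2_E : ∀ x y : ZMod 2, (x = 1 ∨ y = 1) →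
    (x^2-1)*(2*y^2-1) + 3*(y*(y*(x-1))) = 0 := by decide

lemma aux_sumK {M : Type*} [AddCommMonoid M] (c : ℕ) (f : ℕ → M) :
    ∑ k ∈ (Finset.Icc 1 (3*c-1)).filter (fun k : ℕ => Nat.Coprime k 3), f k
      = ∑ j ∈ Finset.range c, (f (3*j+1) + f (3*j+2)) := by
  induction c with
  | zero => simp
  | succ n ih =>
      have hcop : ∀ k : ℕ, Nat.Coprime k 3 ↔ ¬ (3 ∣ k) := fun k =>
        Nat.coprime_comm.trans (Nat.Prime.coprime_iff_not_dvd Nat.prime_three)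
      have hset : (Finset.Icc 1 (3*(n+1)-1)).filter (fun k : ℕ => Nat.Coprime k 3)
          = insert (3*n+1) (insert (3*n+2)
              ((Finset.Icc 1 (3*n-1)).filter (fun k : ℕ => Nat.Coprime k 3))) := by
        ext k
        simp only [Finset.mem_filter, Finset.mem_Icc, Finset.mem_insert, hcop]
        omega
      have h2 : (3*n+2) ∉ (Finset.Icc 1 (3*n-1)).filter (fun k : ℕ => Nat.Coprime k 3) := by
        simp only [Finset.mem_filter, Finset.mem_Icc]; omega
      have h1 : (3*n+1) ∉ insert (3*n+2)
          ((Finset.Icc 1 (3*n-1)).filter (fun k : ℕ => Nat.Coprime k 3)) := by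
        simp only [Finset.mem_insert, Finset.mem_filter, Finset.mem_Icc]; omega
      rw [hset, Finset.sum_insert h1, Finset.sum_insert h2, ih, Finset.sum_range_succ]
      abel

lemma aux_sq_sum (c : ℕ) :
    ∑ j ∈ Finset.range c, (((3*j+1:ℕ):ℤ)^2 + ((3*j+2:ℕ):ℤ)^2) = c*(6*c^2-1) := by
  induction c with
  | zero => simp
  | succ n ih => rw [Finset.sum_range_succ, ih]; push_cast; ring

set_option maxHeartbeats 2000000 in
/-- **Lemma 2.4, case `p = 3`.** Let `c` be a positive integer with `3 ∤ c`, and `a`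
an integer coprime to both `c` and `3`. If `h k` is the unique integer with
`1 ≤ h k ≤ 3c - 1` and `h k ≡ a k (mod 3c)` for every `k` coprime to `3`, then
`∑_{k=1, gcd(k,3)=1}^{3c-1} 1/(k·h(k)) ≡ -c/a³ (mod 9)`. -/
theorem harmonic_h_sum_three
    (c : ℕ) (a : ℤ) (h : ℕ → ℕ)
    (hc : 0 < c) (h3c : ¬ (3 : ℕ) ∣ c)
    (hac : IsCoprime a (c : ℤ)) (ha3 : IsCoprime a (3 : ℤ))
    (hh : ∀ k : ℕ, 0 < k → Nat.Coprime k 3 →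
      1 ≤ h k ∧ h k ≤ 3 * c - 1 ∧ ((3 * c : ℕ) : ℤ) ∣ ((h k : ℤ) - a * (k : ℤ))) :
    (9 : ℤ) ∣
      ((∑ k ∈ (Finset.Icc 1 (3 * c - 1)).filter (fun k : ℕ => Nat.Coprime k 3),
          (1 : ℚ) / ((k * h k : ℕ) : ℚ))
        - (-(c : ℚ) / (a : ℚ) ^ 3)).num := by
  set K := (Finset.Icc 1 (3 * c - 1)).filter (fun k : ℕ => Nat.Coprime k 3) with hK
  have hcop : ∀ k : ℕ, Nat.Coprime k 3 ↔ ¬ (3 ∣ k) := fun k =>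
    Nat.coprime_comm.trans (Nat.Prime.coprime_iff_not_dvd Nat.prime_three)
  have hmem : ∀ k ∈ K, (1 ≤ k ∧ k ≤ 3*c-1) ∧ Nat.Coprime k 3 := by
    intro k hk
    simpa [hK, Finset.mem_filter, Finset.mem_Icc] using hk
  have hna : ¬ (3:ℤ) ∣ a := by
    intro hdvd
    have hu := ha3.isUnit_of_dvd' hdvd dvd_rfl
    rw [Int.isUnit_iff] at hu
    omega
  have hndk : ∀ k ∈ K, ¬ (3 ∣ k) := fun k hk => (hcop k).mp (hmem k hk).2
  have hhk : ∀ k ∈ K, 1 ≤ h k ∧ h k ≤ 3*c-1 ∧ ((3*c:ℕ):ℤ) ∣ ((h k:ℤ) - a * k) :=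
    fun k hk => hh k (by have := (hmem k hk).1; omega) (hmem k hk).2
  have hdvd3c : ∀ k ∈ K, (3*(c:ℤ)) ∣ ((h k:ℤ) - a*k) := by
    intro k hk
    have := (hhk k hk).2.2
    push_cast at this
    exact this
  have hndh : ∀ k ∈ K, ¬ (3 ∣ h k) := by
    intro k hk hdvd
    have h3 : (3:ℤ) ∣ ((h k:ℤ) - a*k) := dvd_trans ⟨(c:ℤ), by ring⟩ (hdvd3c k hk)
    have h3h : (3:ℤ) ∣ ((h k:ℕ):ℤ) := by exact_mod_cast Int.natCast_dvd_natCast.mpr hdvd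
    have h3ak : (3:ℤ) ∣ a * k := by
      obtain ⟨t1, ht1⟩ := h3
      obtain ⟨t2, ht2⟩ := h3h
      exact ⟨t2 - t1, by linarith⟩
    rcases (Int.prime_three.dvd_mul.mp h3ak) with h' | h'
    · exact hna h'
    · exact hndk k hk (by exact_mod_cast h')
  -- the quotient m
  set m : ℕ → ℤ := fun k => (a*k - (h k:ℤ)) / (3*c) with hmdef
  have hm : ∀ k ∈ K, a*k - (h k:ℤ) = 3*c * m k := by
    intro k hk
    have hd : (3*(c:ℤ)) ∣ (a*k - (h k:ℤ)) := by
      obtain ⟨t, ht⟩ := hdvd3c k hk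
      exact ⟨-t, by linarith⟩
    exact (Int.mul_ediv_cancel' hd).symm

  -- pairing k ↔ 3c - k
  have hkK' : ∀ k ∈ K, (3*c - k) ∈ K := by
    intro k hk
    have h1 := (hmem k hk).1
    have h2 := hndk k hk
    simp only [hK, Finset.mem_filter, Finset.mem_Icc, hcop]
    omega
  have hcast' : ∀ k ∈ K, ((3*c - k : ℕ):ℤ) = 3*(c:ℤ) - k := by
    intro k hk
    have h1 := (hmem k hk).1
    omega
  have hpair_h : ∀ k ∈ K, (h k : ℤ) + (h (3*c - k) : ℤ) = 3*c := by
    intro k hk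
    obtain ⟨t1, ht1⟩ := hdvd3c k hk
    obtain ⟨t2, ht2⟩ := hdvd3c _ (hkK' k hk)
    rw [hcast' k hk] at ht2
    have hb1 := hhk k hk
    have hb2 := hhk _ (hkK' k hk)
    have hc1 : (1:ℤ) ≤ (c:ℤ) := by exact_mod_cast hc
    have hbb1 : (1:ℤ) ≤ (h k:ℤ) ∧ (h k:ℤ) ≤ 3*(c:ℤ) - 1 := by
      have := hb1.1; have := hb1.2.1; omega
    have hbb2 : (1:ℤ) ≤ (h (3*c-k):ℤ) ∧ (h (3*c-k):ℤ) ≤ 3*(c:ℤ) - 1 := by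
      have := hb2.1; have := hb2.2.1; omega
    have hsum : (h k:ℤ) + (h (3*c-k):ℤ) = 3*(c:ℤ)*(t1+t2+a) := by
      linear_combination ht1 + ht2
    have hs1 : 1 ≤ t1+t2+a := by nlinarith [hbb1.1, hbb2.1, hbb1.2, hbb2.2]
    have hs2 : t1+t2+a ≤ 1 := by nlinarith [hbb1.1, hbb2.1, hbb1.2, hbb2.2]
    have : t1+t2+a = 1 := le_antisymm hs2 hs1
    rw [this] at hsum
    linarith
  have hpair_m : ∀ k ∈ K, m k + m (3*c - k) = a - 1 := by
    intro k hk
    have e1 := hm k hk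
    have e2 := hm _ (hkK' k hk)
    rw [hcast' k hk] at e2
    have hph := hpair_h k hk
    have hc0 : (3*(c:ℤ)) ≠ 0 := by positivity
    apply mul_left_cancel₀ hc0
    linear_combination -e1 - e2 - hph
  have hswap : ∑ k ∈ K, m (3*c - k) = ∑ k ∈ K, m k := by
    apply Finset.sum_nbij' (i := fun k => 3*c - k) (j := fun k => 3*c - k)
    · exact hkK'
    · exact hkK'
    · intro k hk; have := (hmem k hk).1; omega
    · intro k hk; have := (hmem k hk).1; omega
    · intro k hk
      rfl
  have hcard : K.card = 2*c := by
    have h1 := aux_sumK c (fun _ => (1:ℕ))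
    rw [← hK] at h1
    rw [Finset.card_eq_sum_ones, h1]
    simp only [Finset.sum_const, Finset.card_range, smul_eq_mul, mul_one]
    omega
  have hsum_m : ∑ k ∈ K, m k = c*(a-1) := by
    have h1 : ∑ k ∈ K, (m k + m (3*c - k)) = ∑ k ∈ K, (a-1) :=
      Finset.sum_congr rfl (fun k hk => hpair_m k hk)
    rw [Finset.sum_add_distrib, hswap, Finset.sum_const, hcard] at h1
    have h2 : ((2*c) • (a-1) : ℤ) = 2*(c:ℤ)*(a-1) := by
      rw [nsmul_eq_mul]; push_cast; ring
    rw [h2] at h1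
    linarith
  -- h is a permutation of K
  have hinj : ∀ x ∈ K, ∀ y ∈ K, h x = h y → x = y := by
    intro x hx y hy hxy
    obtain ⟨t1, ht1⟩ := hdvd3c x hx
    obtain ⟨t2, ht2⟩ := hdvd3c y hy
    have hcx : ((h x:ℕ):ℤ) = ((h y:ℕ):ℤ) := by exact_mod_cast hxy
    have hd : (3*(c:ℤ)) ∣ a*((x:ℤ) - y) := ⟨t2 - t1, by linear_combination ht2 - ht1 + hcx⟩
    have hco : IsCoprime (3*(c:ℤ)) a := IsCoprime.mul_left ha3.symm hac.symm
    have hd2 : (3*(c:ℤ)) ∣ ((x:ℤ) - y) := by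
      have := hco.dvd_of_dvd_mul_left (by rwa [mul_comm] at hd)
      exact this
    obtain ⟨t, ht⟩ := hd2
    have hb1 := (hmem x hx).1
    have hb2 := (hmem y hy).1
    have hc1 : (1:ℤ) ≤ (c:ℤ) := by exact_mod_cast hc
    have hbnd : -(3*(c:ℤ)) < (x:ℤ) - y ∧ (x:ℤ) - y < 3*(c:ℤ) := by omega
    have ht1' : t < 1 := by nlinarith [hbnd.2]
    have ht2' : -1 < t := by nlinarith [hbnd.1]
    have ht0 : t = 0 := by omega
    rw [ht0, mul_zero] at ht
    omega
  have hmapsto : ∀ k ∈ K, h k ∈ K := by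
    intro k hk
    have h1 := hhk k hk
    have h2 := hndh k hk
    simp only [hK, Finset.mem_filter, Finset.mem_Icc, hcop]
    exact ⟨⟨h1.1, h1.2.1⟩, h2⟩
  have himg : K.image h = K := by
    apply Finset.eq_of_subset_of_card_le
    · intro x hx
      obtain ⟨y, hy, rfl⟩ := Finset.mem_image.mp hx
      exact hmapsto y hy
    · rw [Finset.card_image_of_injOn
        (fun x hx y hy hxy => hinj x (Finset.mem_coe.mp hx) y (Finset.mem_coe.mp hy) hxy)]
  have hperm : ∀ f : ℕ → ℤ, ∑ k ∈ K, f (h k) = ∑ k ∈ K, f k := by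
    intro f
    calc ∑ k ∈ K, f (h k) = ∑ x ∈ K.image h, f x := (Finset.sum_image hinj).symm
    _ = ∑ x ∈ K, f x := by rw [himg]
  have hT2' : ∑ k ∈ K, ((k:ℕ):ℤ)^2 = (c:ℤ)*(6*(c:ℤ)^2-1) := by
    rw [hK, aux_sumK c (fun k => ((k:ℕ):ℤ)^2)]
    exact aux_sq_sum c
  have hsum_hsq : ∑ k ∈ K, ((h k:ℕ):ℤ)^2 = (c:ℤ)*(6*(c:ℤ)^2-1) := by
    rw [hperm (fun n => ((n:ℕ):ℤ)^2)]; exact hT2'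

  -- main integer identity
  have hptw : ∀ k ∈ K, a^2*((k:ℕ):ℤ)^2
      = ((h k:ℕ):ℤ)^2 + 6*a*(c:ℤ)*(m k*(k:ℕ)) - 9*(c:ℤ)^2*(m k)^2 := by
    intro k hk
    linear_combination (a*(k:ℤ) + ((h k:ℕ):ℤ) - 3*(c:ℤ)*m k) * hm k hk
  have hsum_iden : a^2*((c:ℤ)*(6*(c:ℤ)^2-1))
      = (c:ℤ)*(6*(c:ℤ)^2-1) + 6*a*(c:ℤ)*(∑ k ∈ K, m k*(k:ℕ))
        - 9*(c:ℤ)^2*(∑ k ∈ K, (m k)^2) := by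
    have h1 := Finset.sum_congr rfl hptw
    rw [Finset.sum_sub_distrib, Finset.sum_add_distrib, ← Finset.mul_sum, ← Finset.mul_sum,
      ← Finset.mul_sum, hsum_hsq, hT2'] at h1
    exact h1
  have hcne : (c:ℤ) ≠ 0 := by
    have : (0:ℤ) < (c:ℤ) := by exact_mod_cast hc
    omega
  have h6W : 6*a*(∑ k ∈ K, m k*(k:ℕ))
      = (a^2-1)*(6*(c:ℤ)^2-1) + 9*(c:ℤ)*(∑ k ∈ K, (m k)^2) := by
    apply mul_left_cancel₀ hcne
    linear_combination -hsum_iden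
  have h3a2 : (3:ℤ) ∣ a^2 - 1 := by
    have h1 : a % 3 = 1 ∨ a % 3 = 2 := by omega
    rcases h1 with h1 | h1
    · obtain ⟨t, ht⟩ : ∃ t, a = 3*t+1 := ⟨a/3, by omega⟩
      exact ⟨3*t^2+2*t, by rw [ht]; ring⟩
    · obtain ⟨t, ht⟩ : ∃ t, a = 3*t+2 := ⟨a/3, by omega⟩
      exact ⟨3*t^2+4*t+1, by rw [ht]; ring⟩
  have h2Qm : (2:ℤ) ∣ (∑ k ∈ K, (m k)^2) - (c:ℤ)*(a-1) := by
    rw [← hsum_m, ← Finset.sum_sub_distrib]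
    refine Finset.dvd_sum (fun k hk => ?_)
    obtain ⟨r, hr⟩ := Int.even_mul_pred_self (m k)
    exact ⟨r, by linear_combination hr⟩
  have h2E : (2:ℤ) ∣ (a^2-1)*(2*(c:ℤ)^2-1) + 3*(c:ℤ)*(∑ k ∈ K, (m k)^2) := by
    suffices hz2 : (((a^2-1)*(2*(c:ℤ)^2-1) + 3*(c:ℤ)*(∑ k ∈ K, (m k)^2) : ℤ) : ZMod 2) = 0 by
      exact_mod_cast (ZMod.intCast_zmod_eq_zero_iff_dvd _ 2).mp hz2
    have hor : ((a:ZMod 2) = 1 ∨ ((c:ℕ):ZMod 2) = 1) := by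
      by_contra hcon
      push_neg at hcon
      have hz : ∀ z : ZMod 2, z ≠ 1 → z = 0 := by decide
      have h2a : (2:ℤ) ∣ a := by
        exact_mod_cast (ZMod.intCast_zmod_eq_zero_iff_dvd a 2).mp (hz _ hcon.1)
      have h2c : (2:ℤ) ∣ (c:ℤ) := by
        have := hz _ hcon.2
        have h2c' : (2:ℕ) ∣ c := by
          rwa [ZMod.natCast_eq_zero_iff] at this
        exact_mod_cast Int.natCast_dvd_natCast.mpr h2c'
      have hu := hac.isUnit_of_dvd' h2a h2c
      rw [Int.isUnit_iff] at hu
      omega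
    obtain ⟨r, hr⟩ := h2Qm
    have hQ : (∑ k ∈ K, (m k)^2 : ℤ) = (c:ℤ)*(a-1) + 2*r := by linarith
    rw [hQ]
    have h20 : (2:ZMod 2) = 0 := by decide
    push_cast
    linear_combination z2_E (a:ZMod 2) ((c:ℕ):ZMod 2) hor + 3*((c:ℕ):ZMod 2)*((r:ℤ):ZMod 2)*h20
  have h6E : (6:ℤ) ∣ (a^2-1)*(2*(c:ℤ)^2-1) + 3*(c:ℤ)*(∑ k ∈ K, (m k)^2) := by
    have h3E : (3:ℤ) ∣ (a^2-1)*(2*(c:ℤ)^2-1) + 3*(c:ℤ)*(∑ k ∈ K, (m k)^2) :=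
      dvd_add (h3a2.mul_right _) ⟨(c:ℤ)*(∑ k ∈ K, (m k)^2), by ring⟩
    omega
  have h9W : (9:ℤ) ∣ 3*a*(∑ k ∈ K, m k*(k:ℕ)) - (a^2-1) := by
    obtain ⟨F, hF⟩ := h6E
    refine ⟨F, by linarith⟩

  -- ZMod 9 facts
  have h90 : (9:ZMod 9) = 0 := by decide
  have hk30 : ∀ k ∈ K, (3:ZMod 9)*((k:ℕ):ZMod 9) ≠ 0 := by
    intro k hk h0
    have h1 : (((3*k:ℕ)):ZMod 9) = 0 := by push_cast; linear_combination h0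
    rw [ZMod.natCast_eq_zero_iff] at h1
    exact hndk k hk (by omega)
  have hh30 : ∀ k ∈ K, (3:ZMod 9)*((h k:ℕ):ZMod 9) ≠ 0 := by
    intro k hk h0
    have h1 : (((3*(h k):ℕ)):ZMod 9) = 0 := by push_cast; linear_combination h0
    rw [ZMod.natCast_eq_zero_iff] at h1
    exact hndh k hk (by omega)
  have hkh30 : ∀ k ∈ K, (3:ZMod 9)*(((k:ℕ):ZMod 9)*((h k:ℕ):ZMod 9)) ≠ 0 := by
    intro k hk h0
    have h1 : (((3*(k*(h k)):ℕ)):ZMod 9) = 0 := by push_cast; linear_combination h0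
    rw [ZMod.natCast_eq_zero_iff] at h1
    have h2 : (3:ℕ) ∣ k*(h k) := by omega
    rcases (Nat.Prime.dvd_mul Nat.prime_three).mp h2 with h' | h'
    · exact hndk k hk h'
    · exact hndh k hk h'
  have hA0 : (3:ZMod 9)*(a:ZMod 9) ≠ 0 := by
    intro h0
    have h1 : (((3*a:ℤ)):ZMod 9) = 0 := by push_cast; linear_combination h0
    rw [ZMod.intCast_zmod_eq_zero_iff_dvd] at h1
    have h2 : ((9:ℕ):ℤ) = 9 := by norm_num
    rw [h2] at h1
    exact hna (by omega)
  have hAu : (a:ZMod 9)*(a:ZMod 9)^5 = 1 := z9_unit _ hA0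
  have hrel : ∀ k ∈ K, (a:ZMod 9)*((k:ℕ):ZMod 9)
      = ((h k:ℕ):ZMod 9) + 3*((c:ℕ):ZMod 9)*((m k : ℤ):ZMod 9) := by
    intro k hk
    have h1 := hm k hk
    have h2 : ((a*(k:ℤ) - ((h k:ℕ):ℤ) : ℤ) : ZMod 9) = ((3*(c:ℤ)*m k : ℤ) : ZMod 9) := by
      rw [h1]
    push_cast at h2
    linear_combination h2
  have hpt : ∀ k ∈ K,
      (a:ZMod 9)^3 * ∏ j ∈ K.erase k, (((j:ℕ):ZMod 9) * ((h j:ℕ):ZMod 9))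
      = (∏ j ∈ K, (((j:ℕ):ZMod 9) * ((h j:ℕ):ZMod 9)))
        * ((a:ZMod 9)^2 * (((k:ℕ):ZMod 9)^5)^2
           + 3*((c:ℕ):ZMod 9)*(a:ZMod 9)*(((m k:ℤ):ZMod 9) * ((k:ℕ):ZMod 9))) := by
    intro k hk
    have hκ := z9_unit _ (hk30 k hk)
    have hη := z9_unit _ (hh30 k hk)
    have huη := z9_unit _ (hkh30 k hk)
    have h3κ := z9_3inv _ (hk30 k hk)
    have hrelk := hrel k hk
    have hprod : (((k:ℕ):ZMod 9) * ((h k:ℕ):ZMod 9))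
        * ∏ j ∈ K.erase k, (((j:ℕ):ZMod 9) * ((h j:ℕ):ZMod 9))
        = ∏ j ∈ K, (((j:ℕ):ZMod 9) * ((h j:ℕ):ZMod 9)) :=
      Finset.mul_prod_erase K (fun j => (((j:ℕ):ZMod 9) * ((h j:ℕ):ZMod 9))) hk
    set A := (a:ZMod 9) with hA
    set C := ((c:ℕ):ZMod 9) with hC
    set κ := ((k:ℕ):ZMod 9) with hκdef
    set η := ((h k:ℕ):ZMod 9) with hηdef
    set μ := ((m k:ℤ):ZMod 9) with hμdef
    set Pe := ∏ j ∈ K.erase k, (((j:ℕ):ZMod 9) * ((h j:ℕ):ZMod 9)) with hPe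
    set P9 := ∏ j ∈ K, (((j:ℕ):ZMod 9) * ((h j:ℕ):ZMod 9)) with hP9
    have herase : Pe = (κ*η)^5 * P9 := by
      linear_combination (-Pe) * huη + ((κ*η)^5) * hprod
    have hw : (κ^3*η)*((κ^5)^3*η^5) = 1 := by
      linear_combination (((κ*κ^5)^2 + κ*κ^5 + 1) * (η*η^5)) * hκ + hη
    have X1 : A^3*(κ*η)^5 = A^2*(κ^5)^2 + 3*C*μ*A*(κ^5)^3 := by
      apply cancel9 hw
      linear_combination (A^3*κ^2) * huη - (A^2*κ*η*(κ*κ^5+1)) * hκ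
        - (3*C*μ*A*η*((κ*κ^5)^2+κ*κ^5+1)) * hκ + (A*(3*C*μ + A*κ)) * hrelk
        + (A*C^2*μ^2) * h90
    have X : A^3*(κ*η)^5 = A^2*(κ^5)^2 + 3*C*A*(μ*κ) := by
      linear_combination X1 + (C*μ*A)*h3κ
    rw [herase]
    linear_combination P9 * X
  have hT : ∑ k ∈ K, (((k:ℕ):ZMod 9)^5)^2 = -((c:ℕ):ZMod 9) := by
    rw [hK, aux_sumK c (fun k => (((k:ℕ):ZMod 9)^5)^2)]
    have hpt1 : ∀ j ∈ Finset.range c,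
        ((((3*j+1:ℕ)):ZMod 9)^5)^2 + ((((3*j+2:ℕ)):ZMod 9)^5)^2 = -1 := by
      intro j _
      push_cast
      exact z9_1 ((j:ℕ):ZMod 9)
    rw [Finset.sum_congr rfl hpt1, Finset.sum_const, Finset.card_range, nsmul_eq_mul,
      mul_neg_one]
  have hW9 : 3*(a:ZMod 9)*(∑ k ∈ K, ((m k:ℤ):ZMod 9)*((k:ℕ):ZMod 9)) = (a:ZMod 9)^2 - 1 := by
    have h0 : ((3*a*(∑ k ∈ K, m k*(k:ℕ)) - (a^2-1) : ℤ) : ZMod 9) = 0 :=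
      (ZMod.intCast_zmod_eq_zero_iff_dvd _ 9).mpr (by exact_mod_cast h9W)
    push_cast at h0
    linear_combination h0

  -- rational bookkeeping
  have ha0 : (a:ℚ) ≠ 0 := by
    intro h0
    have : a = 0 := by exact_mod_cast h0
    exact hna (this ▸ dvd_zero 3)
  set N : ℤ := a^3 * (∑ k ∈ K, ∏ j ∈ K.erase k, ((j:ℤ)*((h j:ℕ):ℤ)))
      + (c:ℤ) * ∏ k ∈ K, ((k:ℤ)*((h k:ℕ):ℤ)) with hN
  set D : ℤ := a^3 * ∏ k ∈ K, ((k:ℤ)*((h k:ℕ):ℤ)) with hD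
  set r : ℚ := (∑ k ∈ K, (1:ℚ)/((k * h k : ℕ):ℚ)) - (-(c:ℚ)/(a:ℚ)^3) with hr
  have hprodQ : ∀ k ∈ K, (1:ℚ)/((k * h k : ℕ):ℚ)
      * ((a:ℚ)^3 * ∏ j ∈ K, ((j:ℚ)*((h j:ℕ):ℚ)))
      = (a:ℚ)^3 * ∏ j ∈ K.erase k, ((j:ℚ)*((h j:ℕ):ℚ)) := by
    intro k hk
    have hkne : ((k:ℕ):ℚ) ≠ 0 := Nat.cast_ne_zero.mpr (by have := (hmem k hk).1; omega)
    have hhne : ((h k:ℕ):ℚ) ≠ 0 := Nat.cast_ne_zero.mpr (by have := (hhk k hk).1; omega)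
    rw [← Finset.mul_prod_erase K (fun j => ((j:ℚ)*((h j:ℕ):ℚ))) hk]
    push_cast
    field_simp
  have key : r * ((D:ℤ):ℚ) = ((N:ℤ):ℚ) := by
    rw [hr, hN, hD]
    have hc1 : ((a^3 * ∏ k ∈ K, ((k:ℤ)*((h k:ℕ):ℤ)) : ℤ):ℚ)
        = (a:ℚ)^3 * ∏ k ∈ K, ((k:ℚ)*((h k:ℕ):ℚ)) := by push_cast; ring
    have hc2 : ((a^3 * (∑ k ∈ K, ∏ j ∈ K.erase k, ((j:ℤ)*((h j:ℕ):ℤ)))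
          + (c:ℤ) * ∏ k ∈ K, ((k:ℤ)*((h k:ℕ):ℤ)) : ℤ):ℚ)
        = (a:ℚ)^3 * (∑ k ∈ K, ∏ j ∈ K.erase k, ((j:ℚ)*((h j:ℕ):ℚ)))
          + (c:ℚ) * ∏ k ∈ K, ((k:ℚ)*((h k:ℕ):ℚ)) := by push_cast; ring
    rw [hc1, hc2, sub_mul, Finset.sum_mul, Finset.sum_congr rfl hprodQ, Finset.mul_sum]
    have hy : (-(c:ℚ)/(a:ℚ)^3)*((a:ℚ)^3*∏ k ∈ K, ((k:ℚ)*((h k:ℕ):ℚ)))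
        = -(c:ℚ)*∏ k ∈ K, ((k:ℚ)*((h k:ℕ):ℚ)) := by field_simp
    rw [hy]
    ring
  have h9N : (9:ℤ) ∣ N := by
    have hcast : ((N:ℤ):ZMod 9) = 0 := by
      rw [hN]
      push_cast
      rw [Finset.mul_sum, Finset.sum_congr rfl hpt, ← Finset.mul_sum,
        Finset.sum_add_distrib, ← Finset.mul_sum, ← Finset.mul_sum, hT]
      linear_combination (∏ j ∈ K, (((j:ℕ):ZMod 9) * ((h j:ℕ):ZMod 9)))*((c:ℕ):ZMod 9)*hW9
    exact_mod_cast (ZMod.intCast_zmod_eq_zero_iff_dvd N 9).mp hcast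
  have hden : ((r.den:ℕ):ℚ) ≠ 0 := Nat.cast_ne_zero.mpr r.den_nz
  have hrnum : (r.num:ℚ) = r * ((r.den:ℕ):ℚ) := by
    have hdd := Rat.num_div_den r
    rw [div_eq_iff hden] at hdd
    exact hdd
  have hND : N * ((r.den:ℕ):ℤ) = r.num * D := by
    have hq : ((N * ((r.den:ℕ):ℤ) : ℤ):ℚ) = ((r.num * D : ℤ):ℚ) := by
      push_cast
      rw [← key, hrnum]
      ring
    exact_mod_cast hq
  have hcop3D : IsCoprime (3:ℤ) D := by
    rw [hD]
    apply IsCoprime.mul_right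
    · exact (ha3.symm).pow_right
    · apply IsCoprime.prod_right
      intro k hk
      apply IsCoprime.mul_right
      · have h1 : Nat.Coprime 3 k := (Nat.Prime.coprime_iff_not_dvd Nat.prime_three).mpr
          (hndk k hk)
        exact_mod_cast Nat.isCoprime_iff_coprime.mpr h1
      · have h1 : Nat.Coprime 3 (h k) := (Nat.Prime.coprime_iff_not_dvd Nat.prime_three).mpr
          (hndh k hk)
        exact_mod_cast Nat.isCoprime_iff_coprime.mpr h1
  have hcop9D : IsCoprime (9:ℤ) D := by
    have h92 : (9:ℤ) = 3^2 := by norm_num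
    rw [h92]
    exact hcop3D.pow_left
  have h9numD : (9:ℤ) ∣ r.num * D := hND ▸ (h9N.mul_right _)
  exact hcop9D.dvd_of_dvd_mul_right h9numD
end

section
/- Let $L$, $M$, $N$ be positive integers. Then, as polynomials with rational coefficients, $f(x; LM, N) \equiv \frac{1 - x^{LMN}}{1 - x^{MN}}\, f(x; M, N) \pmod N$, i.e. each coefficient of $f(x; LM, N)$ is congruent modulo $N$ to the corresponding coefficient of $(1 + x^{MN} + x^{2MN} + \cdots + x^{(L-1)MN})\, f(x; M, N)$. -/
open Finset Polynomial

/-- `fPoly M N` is the polynomial `f(x; M, N) = ∑_{k=1, gcd(k,N)=1}^{MN} x^k/k`. -/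
noncomputable def fPoly (M N : ℕ) : Polynomial ℚ :=
  ∑ k ∈ (Finset.Icc 1 (M * N)).filter (fun k : ℕ => Nat.Coprime k N),
    Polynomial.C (1 / (k : ℚ)) * Polynomial.X ^ k

lemma fPoly_coeff (M N m : ℕ) :
    (fPoly M N).coeff m =
      if 1 ≤ m ∧ m ≤ M * N ∧ Nat.Coprime m N then 1 / (m : ℚ) else 0 := by
  rw [fPoly, Polynomial.finset_sum_coeff]
  simp only [Polynomial.coeff_C_mul, Polynomial.coeff_X_pow, mul_ite, mul_one, mul_zero]
  rw [Finset.sum_ite_eq _ m (fun k => 1 / (k : ℚ))]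
  simp [Finset.mem_filter, and_assoc]

lemma num_dvd_helper (N : ℕ) (a : ℤ) (b : ℕ) (hb : b ≠ 0) (ha : (N : ℤ) ∣ a)
    (hcop : Nat.Coprime b N) : (N : ℤ) ∣ ((a : ℚ) / (b : ℚ)).num := by
  set q : ℚ := (a : ℚ) / (b : ℚ) with hq
  have hbQ : (b : ℚ) ≠ 0 := Nat.cast_ne_zero.mpr hb
  have h1 : q * (b : ℚ) = (a : ℚ) := div_mul_cancel₀ _ hbQ
  have hden : (q.den : ℚ) ≠ 0 := Nat.cast_ne_zero.mpr q.den_nz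
  have h2 : ((q.num * b : ℤ) : ℚ) = ((a * q.den : ℤ) : ℚ) := by
    push_cast
    rw [← Rat.num_div_den q] at h1
    field_simp at h1
    linarith [h1]
  have h3 : q.num * (b : ℤ) = a * (q.den : ℤ) := by exact_mod_cast h2
  have h4 : (N : ℤ) ∣ q.num * (b : ℤ) := h3 ▸ ha.mul_right _
  have hcop' : IsCoprime (N : ℤ) (b : ℤ) :=
    Nat.isCoprime_iff_coprime.mpr hcop.symm
  exact hcop'.dvd_of_dvd_mul_right h4

/-- **Lemma 4.2.** For positive integers `L, M, N`, the coefficients of `f(x; LM, N)`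
are congruent mod `N` to those of `(1 + x^{MN} + ⋯ + x^{(L-1)MN}) f(x; M, N)`. -/
theorem fPoly_periodicity
    (L M N : ℕ) (hL : 0 < L) (hM : 0 < M) (hN : 0 < N) :
    ∀ m : ℕ,
      (N : ℤ) ∣
        ((fPoly (L * M) N).coeff m -
          ((∑ ℓ ∈ Finset.range L, (Polynomial.X : Polynomial ℚ) ^ (ℓ * M * N)) *
            fPoly M N).coeff m).num := by
  intro m
  have he : 0 < M * N := Nat.mul_pos hM hN
  have hprod : ((∑ ℓ ∈ Finset.range L, (Polynomial.X : Polynomial ℚ) ^ (ℓ * M * N)) *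
      fPoly M N).coeff m =
      ∑ ℓ ∈ Finset.range L,
        if ℓ * M * N ≤ m then (fPoly M N).coeff (m - ℓ * M * N) else 0 := by
    rw [Finset.sum_mul, Polynomial.finset_sum_coeff]
    refine Finset.sum_congr rfl fun ℓ _ => ?_
    rw [mul_comm, Polynomial.coeff_mul_X_pow']
  rw [hprod]
  by_cases hcond : 1 ≤ m ∧ m ≤ L * M * N ∧ Nat.Coprime m N
  · obtain ⟨hm1, hmL, hcop⟩ := hcond
    set ℓ0 := (m - 1) / (M * N) with hl0
    have hdm : ℓ0 * (M * N) + (m - 1) % (M * N) = m - 1 := by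
      rw [mul_comm]; exact Nat.div_add_mod (m - 1) (M * N)
    have hmod : (m - 1) % (M * N) < M * N := Nat.mod_lt _ he
    have hassoc0 : ℓ0 * M * N = ℓ0 * (M * N) := mul_assoc _ _ _
    clear_value ℓ0
    clear hl0
    have hmL' : m ≤ L * (M * N) := by rw [← mul_assoc]; exact hmL
    have hl0m : ℓ0 * (M * N) < m := by omega
    have hmub : m ≤ ℓ0 * (M * N) + M * N := by omega
    have hl0L : ℓ0 < L := by
      have h1 : ℓ0 * (M * N) < L * (M * N) := by omega
      exact Nat.lt_of_mul_lt_mul_right h1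
    clear hdm hmod
    obtain ⟨k, hkm⟩ : ∃ k, k + ℓ0 * (M * N) = m :=
      ⟨m - ℓ0 * (M * N), Nat.sub_add_cancel hl0m.le⟩
    have hk1 : 1 ≤ k := by omega
    have hke : k ≤ M * N := by omega
    have hkcop : Nat.Coprime k N := by
      have h : Nat.Coprime (k + ℓ0 * (M * N)) N := by rw [hkm]; exact hcop
      rwa [show k + ℓ0 * (M * N) = k + (ℓ0 * M) * N by ring,
        Nat.coprime_add_mul_right_left k N (ℓ0 * M)] at h
    have hsum : (∑ ℓ ∈ Finset.range L,
        if ℓ * M * N ≤ m then (fPoly M N).coeff (m - ℓ * M * N) else 0) = 1 / (k : ℚ) := by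
      rw [Finset.sum_eq_single ℓ0]
      · rw [hassoc0, if_pos hl0m.le, fPoly_coeff]
        have hsub : m - ℓ0 * (M * N) = k := by omega
        rw [hsub, if_pos ⟨hk1, hke, hkcop⟩]
      · intro ℓ hℓ hne
        have hassocℓ : ℓ * M * N = ℓ * (M * N) := mul_assoc _ _ _
        rw [hassocℓ]
        rcases lt_or_gt_of_ne hne with h | h
        · have hmul : (ℓ + 1) * (M * N) ≤ ℓ0 * (M * N) := Nat.mul_le_mul_right _ h
          have hsucc : (ℓ + 1) * (M * N) = ℓ * (M * N) + M * N := by ring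
          rw [if_pos (by omega), fPoly_coeff, if_neg]
          rintro ⟨_, h2, _⟩
          omega
        · have hmul : (ℓ0 + 1) * (M * N) ≤ ℓ * (M * N) := Nat.mul_le_mul_right _ h
          have hsucc : (ℓ0 + 1) * (M * N) = ℓ0 * (M * N) + M * N := by ring
          have hge : m ≤ ℓ * (M * N) := by omega
          rcases eq_or_lt_of_le hge with heq | hlt'
          · rw [if_pos (le_of_eq heq.symm), fPoly_coeff, if_neg]
            rintro ⟨h1, _, _⟩
            omega
          · rw [if_neg (by omega)]
      · intro h
        exact absurd (Finset.mem_range.mpr hl0L) h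
    rw [hsum, fPoly_coeff, if_pos ⟨hm1, hmL, hcop⟩]
    have hm0 : (m : ℚ) ≠ 0 := Nat.cast_ne_zero.mpr (by omega)
    have hk0 : (k : ℚ) ≠ 0 := Nat.cast_ne_zero.mpr (by omega)
    have hdiff : 1 / (m : ℚ) - 1 / (k : ℚ) =
        (((k : ℤ) - (m : ℤ) : ℤ) : ℚ) / ((m * k : ℕ) : ℚ) := by
      push_cast
      field_simp
    rw [hdiff]
    refine num_dvd_helper N _ _ (by positivity) ?_ ?_
    · have heq : (k : ℤ) - (m : ℤ) = -(((ℓ0 * M : ℕ) : ℤ) * N) := by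
        have := hkm
        push_cast at this ⊢
        nlinarith [this]
      rw [heq]
      exact dvd_neg.mpr (dvd_mul_left _ _)
    · exact Nat.Coprime.mul hcop hkcop
  · have hL0 : (fPoly (L * M) N).coeff m = 0 := by
      rw [fPoly_coeff, if_neg]
      exact hcond
    have hR0 : (∑ ℓ ∈ Finset.range L,
        if ℓ * M * N ≤ m then (fPoly M N).coeff (m - ℓ * M * N) else 0) = 0 := by
      refine Finset.sum_eq_zero fun ℓ hℓ => ?_
      split_ifs with hle
      · rw [fPoly_coeff, if_neg]
        rintro ⟨h1, h2, h3⟩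
        apply hcond
        have hℓL := Finset.mem_range.mp hℓ
        refine ⟨by omega, ?_, ?_⟩
        · calc m ≤ ℓ * M * N + M * N := by omega
          _ = (ℓ + 1) * (M * N) := by ring
          _ ≤ L * (M * N) := Nat.mul_le_mul_right _ (by omega)
          _ = L * M * N := by ring
        · have hds : Nat.Coprime (m - ℓ * M * N + ℓ * M * N) N := by
            rw [show m - ℓ * M * N + ℓ * M * N = m - ℓ * M * N + (ℓ * M) * N by ring]
            rwa [Nat.coprime_add_mul_right_left]
          rwa [Nat.sub_add_cancel hle] at hds
      · rfl
    rw [hL0, hR0]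
    simp
end

section
/- For any positive integer $s$, the rational number $\sum_{k=1,\ \gcd(k,3)=1}^{3s-1} 1/k^2$ is congruent to $-s$ modulo $9$. -/
open Finset

private lemma coprime3 (n : ℕ) (h : ¬ (3:ℕ) ∣ n) : Nat.Coprime n 3 :=
  Nat.coprime_comm.mp ((Nat.prime_three.coprime_iff_not_dvd).mpr h)

private lemma num_dvd (q : ℚ) (a b : ℤ) (hb : ¬ (3:ℤ) ∣ b) (h : q = 9 * a / b) :
    (9:ℤ) ∣ q.num := by
  have hb0 : b ≠ 0 := by rintro rfl; exact hb (dvd_zero 3)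
  have hbq : (b:ℚ) ≠ 0 := Int.cast_ne_zero.mpr hb0
  have hd : ((q.den : ℤ) : ℚ) ≠ 0 := by
    exact_mod_cast (Nat.cast_ne_zero (R := ℚ)).mpr q.den_nz
  have hq : (q.num : ℚ) / (q.den : ℚ) = 9 * a / b := by
    rw [← h]; exact_mod_cast q.num_div_den
  have key : q.num * b = 9 * a * q.den := by
    have := (div_eq_div_iff hd hbq).mp hq
    exact_mod_cast this
  have h3 : IsCoprime (3:ℤ) b := Int.prime_three.coprime_iff_not_dvd.mpr hb
  have h9 : IsCoprime (9:ℤ) b := by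
    have h := h3.mul_left h3
    norm_num at h
    exact h
  have : (9:ℤ) ∣ q.num * b := ⟨a * q.den, by linarith [key]⟩
  exact h9.dvd_of_dvd_mul_right this

/-- **Equation (2.4).** For any positive integer `s`,
`∑_{k=1, gcd(k,3)=1}^{3s-1} 1/k² ≡ -s (mod 9)`. -/
theorem sum_inv_sq_mod_nine (s : ℕ) (hs : 0 < s) :
    (9 : ℤ) ∣
      ((∑ k ∈ (Finset.Icc 1 (3 * s - 1)).filter (fun k : ℕ => Nat.Coprime k 3),
          (1 : ℚ) / (k : ℚ) ^ 2) - (-(s : ℚ))).num := by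
  have main : ∀ s : ℕ, 1 ≤ s → ∃ a b : ℤ, ¬(3:ℤ) ∣ b ∧
      (∑ k ∈ (Finset.Icc 1 (3 * s - 1)).filter (fun k : ℕ => Nat.Coprime k 3),
          (1 : ℚ) / (k : ℚ) ^ 2) + (s:ℚ) = 9 * a / b := by
    intro s hs
    induction s, hs using Nat.le_induction with
    | base =>
      refine ⟨1, 4, by norm_num, ?_⟩
      have : (Finset.Icc 1 (3*1-1) : Finset ℕ) = {1, 2} := by decide
      rw [this]
      norm_num [Finset.filter_insert, Finset.filter_singleton, Nat.Coprime]
    | succ n hn ih =>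
      obtain ⟨a, b, hb, hab⟩ := ih
      have hb0 : (b:ℚ) ≠ 0 := Int.cast_ne_zero.mpr (by rintro rfl; exact hb (dvd_zero 3))
      set d : ℤ := ((3*(n:ℤ)+1)*(3*(n:ℤ)+2))^2 with hd
      have hd3 : ¬ (3:ℤ) ∣ d := by
        intro h
        have := Int.prime_three.dvd_of_dvd_pow h
        rcases (Int.prime_three.dvd_mul.mp this) with h | h <;> omega
      have hd0 : (d:ℚ) ≠ 0 := Int.cast_ne_zero.mpr (fun h => hd3 (h ▸ dvd_zero 3))
      have hbd3 : ¬ (3:ℤ) ∣ b * d := by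
        intro h
        rcases Int.prime_three.dvd_mul.mp h with h | h
        · exact hb h
        · exact hd3 h
      refine ⟨a * d + (9*(n:ℤ)^4+18*(n:ℤ)^3+15*(n:ℤ)^2+6*(n:ℤ)+1) * b, b * d, hbd3, ?_⟩
      have hm : 3*(n+1)-1 = (3*n-1)+1+1+1 := by omega
      rw [hm, Finset.sum_filter, Finset.sum_Icc_succ_top (by omega),
        Finset.sum_Icc_succ_top (by omega), Finset.sum_Icc_succ_top (by omega),
        ← Finset.sum_filter]
      rw [show 3*n-1+1 = 3*n by omega, show 3*n-1+2+1 = 3*n+2 by omega]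
      have h0 : ¬ Nat.Coprime (3*n) 3 := by
        have : Nat.gcd (3*n) (3*1) = 3 * Nat.gcd n 1 := Nat.gcd_mul_left 3 n 1
        simp [Nat.Coprime]
      have h1 : Nat.Coprime (3*n+1) 3 := coprime3 _ (by omega)
      have h2 : Nat.Coprime (3*n+2) 3 := coprime3 _ (by omega)
      rw [if_neg h0, if_pos h1, if_pos h2]
      have key : (1:ℚ)/((3*n+1:ℕ):ℚ)^2 + (1:ℚ)/((3*n+2:ℕ):ℚ)^2 + 1
          = 9 * ((9*(n:ℚ)^4+18*(n:ℚ)^3+15*(n:ℚ)^2+6*(n:ℚ)+1)) / ((d:ℤ):ℚ) := by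
        have hx : ((3*n+1:ℕ):ℚ) ≠ 0 := by positivity
        have hy : ((3*n+2:ℕ):ℚ) ≠ 0 := by positivity
        rw [hd]
        push_cast
        field_simp
        ring
      have comb : (9:ℚ)*a/b + 9*(9*(n:ℚ)^4+18*(n:ℚ)^3+15*(n:ℚ)^2+6*(n:ℚ)+1)/((d:ℤ):ℚ)
          = 9*((a:ℚ)*(d:ℚ) + (9*(n:ℚ)^4+18*(n:ℚ)^3+15*(n:ℚ)^2+6*(n:ℚ)+1)*(b:ℚ))/((b:ℚ)*(d:ℚ)) := by
        field_simp
      push_cast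
      push_cast at key
      linear_combination hab + key + comb
  obtain ⟨a, b, hb, hab⟩ := main s hs
  have : (∑ k ∈ (Finset.Icc 1 (3 * s - 1)).filter (fun k : ℕ => Nat.Coprime k 3),
          (1 : ℚ) / (k : ℚ) ^ 2) - (-(s : ℚ)) = 9 * a / b := by rw [← hab]; ring
  exact num_dvd _ a b hb this
end
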